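/- arXiv:2206.13482 — 2 statements merged into one kernel-verified Lean document; each statement's English description precedes it below -/
import Mathlib

section
/- Suppose k < n, A ∈ ℝ^{n×n} is invertible, and Z ∈ ℝ^{n×k} is such that Z Z^T + A is invertible. Then Z^T (Z Z^T + A)^{-2} Z = (I_k + Z^T A^{-1} Z)^{-1} Z^T A^{-2} Z (I_k + Z^T A^{-1} Z)^{-1}. -/
/-!
Push-through identities: since `(Z Zᵀ + A) A⁻¹ Z = Z (1 + Zᵀ A⁻¹ Z)`, we get
`(Z Zᵀ + A)⁻¹ Z = A⁻¹ Z (1 + Zᵀ A⁻¹ Z)⁻¹`, and symmetrically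
`Zᵀ (Z Zᵀ + A)⁻¹ = (1 + Zᵀ A⁻¹ Z)⁻¹ Zᵀ A⁻¹`. Splitting `(Z Zᵀ + A)⁻²` between the two factors
gives the identity. The middle factor `1 + Zᵀ A⁻¹ Z` is invertible by Sylvester's determinant
identity, its determinant being `det (A⁻¹ (Z Zᵀ + A))`.
-/

open scoped Matrix

namespace Matrix

variable {m n α : Type*} [Fintype m] [DecidableEq m] [Fintype n] [DecidableEq n] [CommRing α]
  {A : Matrix m m α} {U : Matrix m n α} {V : Matrix n m α}

theorem isUnit_one_add_mul_inv_mul (hA : IsUnit A) (hUVA : IsUnit (U * V + A)) :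
    IsUnit (1 + V * A⁻¹ * U) := by
  have hdet : (1 + V * A⁻¹ * U).det = (A⁻¹ * (U * V + A)).det := by
    rw [Matrix.mul_assoc, det_one_add_mul_comm, Matrix.mul_add, nonsing_inv_mul _
      ((isUnit_iff_isUnit_det A).mp hA), ← Matrix.mul_assoc, add_comm]
  rw [isUnit_iff_isUnit_det, hdet, det_mul]
  exact (isUnit_nonsing_inv_det_iff.mpr ((isUnit_iff_isUnit_det A).mp hA)).mul
    ((isUnit_iff_isUnit_det _).mp hUVA)

theorem mul_add_inv_mul (hA : IsUnit A) (hUVA : IsUnit (U * V + A)) :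
    (U * V + A)⁻¹ * U = A⁻¹ * U * (1 + V * A⁻¹ * U)⁻¹ := by
  obtain ⟨_⟩ := hA.nonempty_invertible
  obtain ⟨_⟩ := hUVA.nonempty_invertible
  obtain ⟨_⟩ := (isUnit_one_add_mul_inv_mul hA hUVA).nonempty_invertible
  have hpush : (U * V + A) * (A⁻¹ * U) = U * (1 + V * A⁻¹ * U) := by
    simp only [Matrix.add_mul, Matrix.mul_add, Matrix.mul_one, Matrix.mul_assoc,
      mul_inv_cancel_left_of_invertible]
    exact add_comm _ _
  rw [inv_mul_eq_iff_eq_mul_of_invertible, ← Matrix.mul_assoc, hpush,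
    mul_inv_cancel_right_of_invertible]

theorem mul_mul_add_inv (hA : IsUnit A) (hUVA : IsUnit (U * V + A)) :
    V * (U * V + A)⁻¹ = (1 + V * A⁻¹ * U)⁻¹ * V * A⁻¹ := by
  obtain ⟨_⟩ := hA.nonempty_invertible
  obtain ⟨_⟩ := hUVA.nonempty_invertible
  obtain ⟨_⟩ := (isUnit_one_add_mul_inv_mul hA hUVA).nonempty_invertible
  have hpush : V * A⁻¹ * (U * V + A) = (1 + V * A⁻¹ * U) * V := by
    simp only [Matrix.mul_add, Matrix.add_mul, Matrix.one_mul, Matrix.mul_assoc,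
      inv_mul_of_invertible, Matrix.mul_one]
    exact add_comm _ _
  rw [mul_inv_eq_iff_eq_mul_of_invertible, Matrix.mul_assoc, Matrix.mul_assoc,
    ← Matrix.mul_assoc V, hpush, inv_mul_cancel_left_of_invertible]

end Matrix

theorem zzt_A_inverse_identity_general {n k : ℕ}
    (A : Matrix (Fin n) (Fin n) ℝ) (hA : IsUnit A)
    (Z : Matrix (Fin n) (Fin k) ℝ) (hZA : IsUnit (Z * Zᵀ + A)) :
    Zᵀ * ((Z * Zᵀ + A)⁻¹ * (Z * Zᵀ + A)⁻¹) * Z =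
      (1 + Zᵀ * A⁻¹ * Z)⁻¹ * (Zᵀ * (A⁻¹ * A⁻¹) * Z) * (1 + Zᵀ * A⁻¹ * Z)⁻¹ := by
  calc Zᵀ * ((Z * Zᵀ + A)⁻¹ * (Z * Zᵀ + A)⁻¹) * Z
      = (Zᵀ * (Z * Zᵀ + A)⁻¹) * ((Z * Zᵀ + A)⁻¹ * Z) := by simp only [Matrix.mul_assoc]
    _ = ((1 + Zᵀ * A⁻¹ * Z)⁻¹ * Zᵀ * A⁻¹) * (A⁻¹ * Z * (1 + Zᵀ * A⁻¹ * Z)⁻¹) := by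
      rw [Matrix.mul_mul_add_inv hA hZA, Matrix.mul_add_inv_mul hA hZA]
    _ = (1 + Zᵀ * A⁻¹ * Z)⁻¹ * (Zᵀ * (A⁻¹ * A⁻¹) * Z) * (1 + Zᵀ * A⁻¹ * Z)⁻¹ := by
      simp only [Matrix.mul_assoc]

theorem zzt_A_inverse_identity {n k : ℕ} (hk : k < n)
    (A : Matrix (Fin n) (Fin n) ℝ) (hA : IsUnit A)
    (Z : Matrix (Fin n) (Fin k) ℝ) (hZA : IsUnit (Z * Zᵀ + A)) :
    Zᵀ * ((Z * Zᵀ + A)⁻¹ * (Z * Zᵀ + A)⁻¹) * Z =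
      (1 + Zᵀ * A⁻¹ * Z)⁻¹ * (Zᵀ * (A⁻¹ * A⁻¹) * Z) * (1 + Zᵀ * A⁻¹ * Z)⁻¹ :=
  zzt_A_inverse_identity_general A hA Z hZA
end

section
/- Let x ∈ ℝ^n be a nonzero vector and A₋ ∈ ℝ^{n×n} a symmetric positive definite matrix, and set A = x x^T + A₋. Then x^T A^{-2} x = (x^T A₋^{-2} x) / (1 + x^T A₋^{-1} x)^2, and consequently x^T A^{-2} x ≤ (x^T A₋^{-2} x) / (x^T A₋^{-1} x)^2. -/
/-!
By Sherman–Morrison, `A⁻¹ x = A₋⁻¹ x / (1 + c)` with `c = xᵀ A₋⁻¹ x > 0`. As `A⁻¹` and `A₋⁻¹` are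
symmetric, `xᵀ A⁻² x = ‖A⁻¹ x‖²` and `xᵀ A₋⁻² x = ‖A₋⁻¹ x‖²`, which gives the identity; the
inequality is then `c² ≤ (1 + c)²`.
-/

open scoped Matrix

namespace Matrix

variable {n : Type*} [Fintype n]

theorem dotProduct_mul_self_mulVec {R : Type*} [CommSemiring R] {M : Matrix n n R}
    (hM : M.IsSymm) (x : n → R) : x ⬝ᵥ ((M * M) *ᵥ x) = (M *ᵥ x) ⬝ᵥ (M *ᵥ x) := by
  rw [← mulVec_mulVec, dotProduct_mulVec, ← mulVec_transpose, hM.eq]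

variable [DecidableEq n]

theorem vecMulVec_add_mulVec_inv_mulVec {K : Type*} [Field K] {A : Matrix n n K}
    (hA : IsUnit A.det) (u v : n → K) :
    (vecMulVec u v + A) *ᵥ (A⁻¹ *ᵥ u) = (1 + v ⬝ᵥ (A⁻¹ *ᵥ u)) • u := by
  rw [add_mulVec, vecMulVec_mulVec, mulVec_mulVec, mul_nonsing_inv A hA, one_mulVec,
    op_smul_eq_smul, add_smul, one_smul, add_comm]

theorem inv_vecMulVec_add_mulVec {K : Type*} [Field K] {A : Matrix n n K} {u v : n → K}
    (hA : IsUnit A.det) (hB : IsUnit (vecMulVec u v + A).det)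
    (hc : 1 + v ⬝ᵥ (A⁻¹ *ᵥ u) ≠ 0) :
    (vecMulVec u v + A)⁻¹ *ᵥ u = (1 + v ⬝ᵥ (A⁻¹ *ᵥ u))⁻¹ • (A⁻¹ *ᵥ u) := by
  rw [← inv_smul_smul₀ hc ((vecMulVec u v + A)⁻¹ *ᵥ u), ← mulVec_smul,
    ← vecMulVec_add_mulVec_inv_mulVec hA u v, mulVec_mulVec, nonsing_inv_mul _ hB, one_mulVec]

end Matrix

open Matrix

theorem sherman_morrison_quadratic_form {n : ℕ} (x : Fin n → ℝ) (hx : x ≠ 0)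
    (Am : Matrix (Fin n) (Fin n) ℝ) (hAm : Am.PosDef) :
    x ⬝ᵥ (((Matrix.vecMulVec x x + Am)⁻¹ * (Matrix.vecMulVec x x + Am)⁻¹).mulVec x) =
      (x ⬝ᵥ ((Am⁻¹ * Am⁻¹).mulVec x)) / (1 + x ⬝ᵥ (Am⁻¹.mulVec x)) ^ 2 ∧
    x ⬝ᵥ (((Matrix.vecMulVec x x + Am)⁻¹ * (Matrix.vecMulVec x x + Am)⁻¹).mulVec x) ≤
      (x ⬝ᵥ ((Am⁻¹ * Am⁻¹).mulVec x)) / (x ⬝ᵥ (Am⁻¹.mulVec x)) ^ 2 := by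
  have hA : (vecMulVec x x + Am).PosDef :=
    PosDef.posSemidef_add (by simpa using posSemidef_vecMulVec_self_star x) hAm
  have hc : 0 < x ⬝ᵥ (Am⁻¹ *ᵥ x) := by simpa using hAm.inv.dotProduct_mulVec_pos hx
  have hsymm : ∀ {M : Matrix (Fin n) (Fin n) ℝ}, M.PosDef → M⁻¹.IsSymm := fun hM =>
    (isHermitian_iff_isSymm.mp hM.isHermitian).inv
  have hq : x ⬝ᵥ ((vecMulVec x x + Am)⁻¹ * (vecMulVec x x + Am)⁻¹) *ᵥ x =
      x ⬝ᵥ ((Am⁻¹ * Am⁻¹) *ᵥ x) / (1 + x ⬝ᵥ (Am⁻¹ *ᵥ x)) ^ 2 := by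
    rw [dotProduct_mul_self_mulVec (hsymm hA), dotProduct_mul_self_mulVec (hsymm hAm),
      inv_vecMulVec_add_mulVec hAm.det_pos.ne'.isUnit hA.det_pos.ne'.isUnit (by positivity),
      smul_dotProduct, dotProduct_smul, smul_eq_mul, smul_eq_mul, ← mul_assoc, ← sq, inv_pow, inv_mul_eq_div]
  have hd : 0 ≤ x ⬝ᵥ ((Am⁻¹ * Am⁻¹) *ᵥ x) := by
    rw [dotProduct_mul_self_mulVec (hsymm hAm)]
    exact dotProduct_self_star_nonneg _
  exact ⟨hq, hq.le.trans (div_le_div_of_nonneg_left hd (by positivity) (by nlinarith))⟩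
end
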